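/- arXiv:2504.07496 — 9 statements merged into one kernel-verified Lean document; each statement's English description precedes it below -/
import Mathlib

section
/- If K₁ and K₂ are both F-controllable sublanguages of L (i.e., for every s in Kᵢ and event σ with sσ ∈ L and sσ ∉ Kᵢ, either σ is controllable or there exists a forcible event σ_f with sσ_f ∈ Kᵢ), then their union K₁ ∪ K₂ is also F-controllable with respect to L, Σ_c, and Σ_f. -/
variable {E : Type*}

/-- A language `K` is F-controllable w.r.t. plant `L`, controllable events `Sc`
and forcible events `Sf`. -/
def FContr (L K : Set (List E)) (Sc Sf : Set E) : Prop :=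
  ∀ s ∈ K, ∀ σ : E, s ++ [σ] ∈ L → s ++ [σ] ∉ K →
    σ ∈ Sc ∨ ∃ σf ∈ Sf, s ++ [σf] ∈ K

/-- A language is prefix-closed. -/
def PrefixClosed (M : Set (List E)) : Prop :=
  ∀ s ∈ M, ∀ t : List E, t <+: s → t ∈ M

/-- Closed-loop language of supervisor `S` over plant `M`. -/
inductive CL (S : List E → Set E) (M : Set (List E)) : List E → Prop
  | nil : CL S M []
  | snoc {s : List E} {σ : E} : CL S M s → s ++ [σ] ∈ M → σ ∈ S s → CL S M (s ++ [σ])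

-- Natural projection onto subalphabet `A`: erase letters outside `A`.
open Classical in
noncomputable def proj (A : Set E) : List E → List E
  | [] => []
  | a :: s => if a ∈ A then a :: proj A s else proj A s

theorem union_FControllable (L K₁ K₂ : Set (List E)) (Sc Sf : Set E)
    (hL : PrefixClosed L) (h1L : K₁ ⊆ L) (h2L : K₂ ⊆ L)
    (h1 : FContr L K₁ Sc Sf) (h2 : FContr L K₂ Sc Sf) :
    FContr L (K₁ ∪ K₂) Sc Sf := by
  intro s hs σ hσL hσK
  rcases hs with hs | hs
  · rcases h1 s hs σ hσL (fun h => hσK (Or.inl h)) with h | ⟨σf, hf, hfm⟩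
    · exact Or.inl h
    · exact Or.inr ⟨σf, hf, Or.inl hfm⟩
  · rcases h2 s hs σ hσL (fun h => hσK (Or.inr h)) with h | ⟨σf, hf, hfm⟩
    · exact Or.inl h
    · exact Or.inr ⟨σf, hf, Or.inr hfm⟩
end

section
/- The union of an arbitrary family of F-controllable sublanguages of L is F-controllable with respect to L, Σ_c, and Σ_f. Consequently, for any K ⊆ L there exists a unique supremal F-controllable sublanguage K↑ of K, namely the union of all F-controllable sublanguages of K. -/
variable {E : Type*}

theorem iUnion_FControllable_and_supremal {ι : Type*}
    (L : Set (List E)) (Sc Sf : Set E) (hL : PrefixClosed L)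
    (K : ι → Set (List E)) (hKL : ∀ i, K i ⊆ L)
    (hF : ∀ i, FContr L (K i) Sc Sf) :
    FContr L (⋃ i, K i) Sc Sf ∧
    ∀ K0 : Set (List E), K0 ⊆ L →
      ∃! Ksup : Set (List E),
        Ksup ⊆ K0 ∧ FContr L Ksup Sc Sf ∧
        (∀ M, M ⊆ K0 → FContr L M Sc Sf → M ⊆ Ksup) ∧
        Ksup = ⋃₀ {M : Set (List E) | M ⊆ K0 ∧ FContr L M Sc Sf} := by
  have sUnionF : ∀ (S : Set (Set (List E))), (∀ M ∈ S, FContr L M Sc Sf) →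
      FContr L (⋃₀ S) Sc Sf := by
    intro S hS s hs σ hsL hsn
    obtain ⟨M, hM, hsM⟩ := hs
    rcases hS M hM s hsM σ hsL (fun h => hsn ⟨M, hM, h⟩) with h | ⟨σf, hσf, hin⟩
    · exact Or.inl h
    · exact Or.inr ⟨σf, hσf, M, hM, hin⟩
  constructor
  · intro s hs σ hsL hsn
    obtain ⟨Ki, ⟨i, rfl⟩, hsM⟩ := hs
    rcases hF i s hsM σ hsL (fun h => hsn (Set.mem_iUnion.2 ⟨i, h⟩)) with h | ⟨σf, hσf, hin⟩
    · exact Or.inl h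
    · exact Or.inr ⟨σf, hσf, Set.mem_iUnion.2 ⟨i, hin⟩⟩
  · intro K0 hK0
    refine ⟨⋃₀ {M : Set (List E) | M ⊆ K0 ∧ FContr L M Sc Sf}, ⟨?_, ?_, ?_, rfl⟩, ?_⟩
    · exact Set.sUnion_subset fun M hM => hM.1
    · exact sUnionF _ fun M hM => hM.2
    · intro M hM hMF s hs; exact ⟨M, ⟨hM, hMF⟩, hs⟩
    · rintro Kx ⟨-, -, -, rfl⟩; rfl
end

section
/- For a prefix-closed, nonempty language K ⊆ L that is F-controllable with respect to L, Σ_c, Σ_f, the supervisor S defined by S(s) = {σ ∈ Σ : sσ ∈ K} achieves exactly K, that is, the closed-loop language L(S/P), defined recursively by ε ∈ L(S/P) and sσ ∈ L(S/P) ↔ (s ∈ L(S/P) ∧ sσ ∈ L ∧ σ ∈ S(s)), equals K. -/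
variable {E : Type*}

theorem canonical_supervisor_achieves_K
    (L K : Set (List E)) (Sc Sf : Set E)
    (hL : PrefixClosed L) (hεL : [] ∈ L)
    (hK : PrefixClosed K) (hεK : [] ∈ K) (hKL : K ⊆ L)
    (hF : FContr L K Sc Sf) :
    {s | CL (fun s => {σ | s ++ [σ] ∈ K}) L s} = K := by
  ext s
  simp only [Set.mem_setOf_eq]
  constructor
  · intro h
    induction h with
    | nil => exact hεK
    | snoc _ _ hσ _ => exact hσ
  · intro hs
    induction s using List.reverseRecOn with
    | nil => exact CL.nil
    | append_singleton t σ ih =>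
      exact CL.snoc (ih (hK _ hs _ ⟨[σ], rfl⟩)) (hKL hs) hs
end

section
/- Let P = P¹ ‖ P² ‖ ... ‖ Pⁿ be a parallel composition of subsystems with local alphabets Σʲ, and let θ_j : Σ* → (Σʲ)* be the natural projections. Given modular supervisors S_j : (Σʲ)* → Set Σʲ, define the conjunction supervisor (∧S_j)(s) = ⋂_j (S_j(θ_j(s)) ∪ (Σ \ Σʲ)). Then the closed-loop language of the modular-controlled system satisfies L(∧S_j / P) = θ₁⁻¹(L(S₁/P¹)) ∩ θ₂⁻¹(L(S₂/P²)) ∩ ... ∩ θₙ⁻¹(L(Sₙ/Pⁿ)). -/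
variable {E : Type*}

lemma proj_append (A : Set E) (s t : List E) :
    proj A (s ++ t) = proj A s ++ proj A t := by
  induction s with
  | nil => simp [proj]
  | cons a s ih => by_cases h : a ∈ A <;> simp [proj, h, ih]

lemma CL_prefixClosed {S : List E → Set E} {M : Set (List E)} {s : List E}
    (h : CL S M s) : ∀ t, t <+: s → CL S M t := by
  induction h with
  | nil => intro t ht; obtain rfl := List.prefix_nil.mp ht; exact CL.nil
  | snoc hCL hM hσ ih =>
    intro t ht
    rcases (List.prefix_concat_iff).mp ht with h1 | h1
    · subst h1; exact CL.snoc hCL hM hσ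
    · exact ih t h1

lemma CL_subset {S : List E → Set E} {M : Set (List E)} (hε : [] ∈ M)
    {s : List E} (h : CL S M s) : s ∈ M := by
  cases h with
  | nil => exact hε
  | snoc _ hM _ => exact hM

lemma CL_snoc_inv {S : List E → Set E} {M : Set (List E)} {s : List E} {σ : E}
    (h : CL S M (s ++ [σ])) : σ ∈ S s := by
  generalize hE : s ++ [σ] = u at h
  cases h with
  | nil => simp at hE
  | snoc hCL hM hσ =>
    obtain ⟨h1, h2⟩ := List.append_inj' hE rfl
    obtain rfl : σ = _ := by simpa using h2
    subst h1; exact hσ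

theorem modular_closedLoop_eq_inter_preimages
    (n : ℕ) (A : Fin n → Set E) (P : Fin n → Set (List E))
    (S : Fin n → List E → Set E)
    (hcov : (⋃ j, A j) = (Set.univ : Set E))
    (hPc : ∀ j, PrefixClosed (P j)) (hPε : ∀ j, [] ∈ P j)
    (hPA : ∀ j, ∀ s ∈ P j, ∀ a ∈ s, a ∈ A j)
    (hS : ∀ j s, S j s ⊆ A j) :
    {s | CL (fun s => ⋂ j, (S j (proj (A j) s) ∪ (A j)ᶜ))
           (⋂ j, proj (A j) ⁻¹' P j) s}
      = ⋂ j, proj (A j) ⁻¹' {t | CL (S j) (P j) t} := by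
  ext s
  simp only [Set.mem_setOf_eq, Set.mem_iInter, Set.mem_preimage]
  constructor
  · intro h
    induction h with
    | nil => intro j; simpa [proj] using CL.nil
    | @snoc s σ hCL hM hσ ih =>
      intro j
      have hMj : proj (A j) (s ++ [σ]) ∈ P j := by
        simpa using Set.mem_iInter.mp hM j
      have hσj := Set.mem_iInter.mp hσ j
      by_cases hA : σ ∈ A j
      · have hp : proj (A j) (s ++ [σ]) = proj (A j) s ++ [σ] := by
          simp [proj_append, proj, hA]
        rw [hp] at hMj ⊢
        rcases hσj with h' | h'
        · exact CL.snoc (ih j) hMj h'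
        · exact absurd hA h'
      · have hp : proj (A j) (s ++ [σ]) = proj (A j) s := by
          simp [proj_append, proj, hA]
        rw [hp]; exact ih j
  · intro h
    induction s using List.reverseRecOn with
    | nil => exact CL.nil
    | append_singleton s σ ih =>
      have hs : ∀ j, CL (S j) (P j) (proj (A j) s) := by
        intro j
        refine CL_prefixClosed (h j) _ ?_
        rw [proj_append]; exact List.prefix_append _ _
      refine CL.snoc (ih hs) ?_ ?_
      · exact Set.mem_iInter.mpr fun j => CL_subset (hPε j) (h j)
      · refine Set.mem_iInter.mpr fun j => ?_
        by_cases hA : σ ∈ A j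
        · left
          have hp : proj (A j) (s ++ [σ]) = proj (A j) s ++ [σ] := by
            simp [proj_append, proj, hA]
          exact CL_snoc_inv (hp ▸ h j)
        · exact Or.inr hA
end

section
/- With the setup of modular supervision, the closed-loop language of the conjunction of modular supervisors equals the parallel composition (synchronous product) of the local closed-loop languages: L(∧S_j/P) = L(S₁/P¹) ‖ L(S₂/P²) ‖ ... ‖ L(Sₙ/Pⁿ), where the parallel composition of languages M_j ⊆ (Σʲ)* is defined as ⋂_j θ_j⁻¹(M_j) ⊆ Σ*. -/
variable {E : Type*}

/-- Synchronous product of languages over local alphabets. -/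
noncomputable def SyncProd {n : ℕ} (A : Fin n → Set E)
    (M : Fin n → Set (List E)) : Set (List E) :=
  ⋂ j, proj (A j) ⁻¹' M j

open Classical in
lemma proj_append_singleton (A : Set E) (s : List E) (σ : E) :
    proj A (s ++ [σ]) = proj A s ++ if σ ∈ A then [σ] else [] := by
  classical
  induction s with
  | nil => simp [proj]
  | cons a t ih =>
    simp only [List.cons_append, proj]
    split <;> simp [ih]

lemma cl_snoc_inv {S : List E → Set E} {M : Set (List E)} {s : List E} {σ : E}
    (h : CL S M (s ++ [σ])) : CL S M s ∧ s ++ [σ] ∈ M ∧ σ ∈ S s := by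
  generalize hw : s ++ [σ] = w at h
  cases h with
  | nil => exact absurd hw (by simp)
  | @snoc s' σ' h1 h2 h3 =>
    obtain ⟨rfl, hσ⟩ := List.append_inj' hw (by simp)
    obtain rfl : σ = σ' := by simpa using hσ
    exact ⟨h1, h2, h3⟩

lemma cl_mem {S : List E → Set E} {M : Set (List E)} (hε : [] ∈ M)
    {t : List E} (h : CL S M t) : t ∈ M := by
  induction h with
  | nil => exact hε
  | snoc _ h2 _ => exact h2

theorem modular_closedLoop_eq_syncProd
    (n : ℕ) (A : Fin n → Set E) (P : Fin n → Set (List E))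
    (S : Fin n → List E → Set E)
    (hcov : (⋃ j, A j) = (Set.univ : Set E))
    (hPc : ∀ j, PrefixClosed (P j)) (hPε : ∀ j, [] ∈ P j)
    (hPA : ∀ j, ∀ s ∈ P j, ∀ a ∈ s, a ∈ A j)
    (hS : ∀ j s, S j s ⊆ A j) :
    {s | CL (fun s => ⋂ j, (S j (proj (A j) s) ∪ (A j)ᶜ))
           (SyncProd A P) s}
      = SyncProd A (fun j => {t | CL (S j) (P j) t}) := by
  classical
  ext s
  constructor
  · intro h
    induction h with
    | nil =>
      refine Set.mem_iInter.2 fun j => ?_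
      simp only [Set.mem_preimage, proj]
      exact CL.nil
    | @snoc s σ hs hM hσ ih =>
      refine Set.mem_iInter.2 fun j => ?_
      have hj : CL (S j) (P j) (proj (A j) s) := Set.mem_iInter.1 ih j
      have hMj : proj (A j) (s ++ [σ]) ∈ P j := Set.mem_iInter.1 hM j
      simp only [Set.mem_preimage, Set.mem_setOf_eq]
      rw [proj_append_singleton] at hMj ⊢
      by_cases hA : σ ∈ A j
      · simp only [if_pos hA] at hMj ⊢
        rcases Set.mem_iInter.1 hσ j with h1 | h1
        · exact CL.snoc hj hMj h1
        · exact absurd hA h1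
      · simpa [if_neg hA] using hj
  · intro h
    induction s using List.reverseRecOn with
    | nil => exact CL.nil
    | append_singleton s σ ih =>
      have hj : ∀ j, CL (S j) (P j) (proj (A j) (s ++ [σ])) :=
        fun j => Set.mem_iInter.1 h j
      have hs : ∀ j, CL (S j) (P j) (proj (A j) s) := by
        intro j
        have := hj j
        rw [proj_append_singleton] at this
        by_cases hA : σ ∈ A j
        · rw [if_pos hA] at this; exact (cl_snoc_inv this).1
        · simpa [if_neg hA] using this
      have hCLs := ih (Set.mem_iInter.2 hs)
      have hM : s ++ [σ] ∈ SyncProd A P := by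
        refine Set.mem_iInter.2 fun j => ?_
        have := hj j
        simp only [Set.mem_preimage]
        rw [proj_append_singleton] at this ⊢
        by_cases hA : σ ∈ A j
        · rw [if_pos hA] at this ⊢; exact (cl_snoc_inv this).2.1
        · rw [if_neg hA] at this ⊢
          simpa using cl_mem (hPε j) ((by simpa using this) : CL (S j) (P j) (proj (A j) s))
      have hσ : σ ∈ ⋂ j, (S j (proj (A j) s) ∪ (A j)ᶜ) := by
        refine Set.mem_iInter.2 fun j => ?_
        by_cases hA : σ ∈ A j
        · left
          have := hj j
          rw [proj_append_singleton, if_pos hA] at this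
          exact (cl_snoc_inv this).2.2
        · exact Or.inr hA
      exact CL.snoc hCLs hM hσ
end

section
/- Suppose K ⊆ L(P) is conditionally decomposable, i.e., K = θ₁(K) ‖ θ₂(K) ‖ ... ‖ θₙ(K). If for each j the projection θ_j(K) is F-controllable with respect to L(Pʲ), Σ_cʲ, Σ_fʲ (and hence achievable by a local supervisor S_j with L(S_j/Pʲ) = θ_j(K)), then the modular supervisors together achieve K exactly: L(∧S_j/P) = K, and moreover L(S_j/Pʲ) ⊆ θ_j(K) for all j. -/
variable {E : Type*}

theorem modular_supervisors_achieve_K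
    (n : ℕ) (A : Fin n → Set E) (P : Fin n → Set (List E))
    (Sc Sf : Set E) (K : Set (List E))
    (hcov : (⋃ j, A j) = (Set.univ : Set E))
    (hPc : ∀ j, PrefixClosed (P j)) (hPε : ∀ j, [] ∈ P j)
    (hPA : ∀ j, ∀ s ∈ P j, ∀ a ∈ s, a ∈ A j)
    (hKL : K ⊆ ⋂ j, proj (A j) ⁻¹' P j)
    (hKc : PrefixClosed K) (hKε : [] ∈ K)
    (hcd : K = ⋂ j, proj (A j) ⁻¹' (proj (A j) '' K))
    (hFj : ∀ j, FContr (P j) (proj (A j) '' K) (Sc ∩ A j) (Sf ∩ A j)) :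
    {s | CL (fun s => ⋂ j,
            ((fun t => {σ | σ ∈ A j ∧ t ++ [σ] ∈ proj (A j) '' K}) (proj (A j) s)
              ∪ (A j)ᶜ))
          (⋂ j, proj (A j) ⁻¹' P j) s} = K ∧
    ∀ j, {t | CL (fun t => {σ | σ ∈ A j ∧ t ++ [σ] ∈ proj (A j) '' K}) (P j) t}
      ⊆ proj (A j) '' K := by
  constructor
  · ext s
    simp only [Set.mem_setOf_eq]
    constructor
    · intro h
      induction h with
      | nil => exact hKε
      | @snoc s σ hs hmem hσ ih =>
        rw [hcd]
        refine Set.mem_iInter.2 fun j => ?_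
        rw [Set.mem_preimage, proj_append]
        have hσj := Set.mem_iInter.1 hσ j
        by_cases hA : σ ∈ A j
        · rcases hσj with h' | h'
          · simpa [proj, hA] using h'.2
          · exact absurd hA h'
        · simpa [proj, hA] using ⟨s, ih, rfl⟩
    · intro hsK
      induction s using List.reverseRecOn with
      | nil => exact CL.nil
      | append_singleton s σ ih =>
        have hs : s ∈ K := hKc _ hsK s ⟨[σ], rfl⟩
        refine CL.snoc (ih hs) (hKL hsK) ?_
        refine Set.mem_iInter.2 fun j => ?_
        by_cases hA : σ ∈ A j
        · left
          refine ⟨hA, ?_⟩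
          have := Set.mem_image_of_mem (proj (A j)) hsK
          rwa [proj_append, show proj (A j) [σ] = [σ] by simp [proj, hA]] at this
        · exact Or.inr hA
  · intro j t ht
    induction ht with
    | nil => exact ⟨[], hKε, rfl⟩
    | snoc _ _ hσ => exact hσ.2
end

section
/- If each modular supervisor S_j↑ is defined by S_j↑(s) = {σ ∈ Σʲ : sσ ∈ K_j↑}, where K_j↑ is the supremal F-controllable sublanguage (assumed prefix-closed, containing ε) of the local specification K_j = θ_j(K), then L(S_j↑/Pʲ) = K_j↑ ⊆ K_j for every j, and the global modular closed-loop behavior is safe: L(∧S_j↑/P) ⊆ K, provided K is conditionally decomposable (K = θ₁(K) ‖ ... ‖ θₙ(K)). -/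
variable {E : Type*}

theorem modular_supremal_supervisors_safe
    (n : ℕ) (A : Fin n → Set E) (P : Fin n → Set (List E))
    (Sc Sf : Set E) (K : Set (List E)) (Kup : Fin n → Set (List E))
    (hcov : (⋃ j, A j) = (Set.univ : Set E))
    (hPc : ∀ j, PrefixClosed (P j)) (hPε : ∀ j, [] ∈ P j)
    (hPA : ∀ j, ∀ s ∈ P j, ∀ a ∈ s, a ∈ A j)
    (hKL : K ⊆ ⋂ j, proj (A j) ⁻¹' P j)
    (hcd : K = ⋂ j, proj (A j) ⁻¹' (proj (A j) '' K))
    (hKupP : ∀ j, Kup j ⊆ P j)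
    (hKupK : ∀ j, Kup j ⊆ proj (A j) '' K)
    (hKupc : ∀ j, PrefixClosed (Kup j)) (hKupε : ∀ j, [] ∈ Kup j)
    (hKupF : ∀ j, FContr (P j) (Kup j) (Sc ∩ A j) (Sf ∩ A j)) :
    (∀ j, {t | CL (fun t => {σ | σ ∈ A j ∧ t ++ [σ] ∈ Kup j}) (P j) t} = Kup j) ∧
    {s | CL (fun s => ⋂ j,
            ({σ | σ ∈ A j ∧ proj (A j) s ++ [σ] ∈ Kup j} ∪ (A j)ᶜ))
          (⋂ j, proj (A j) ⁻¹' P j) s} ⊆ K := by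
  constructor
  · intro j
    ext t
    simp only [Set.mem_setOf_eq]
    constructor
    · intro h
      induction h with
      | nil => exact hKupε j
      | snoc _ _ hσ _ => exact hσ.2
    · intro ht
      induction t using List.reverseRecOn with
      | nil => exact CL.nil
      | append_singleton s σ ih =>
        have hs : s ∈ Kup j := hKupc j _ ht s ⟨[σ], rfl⟩
        have hP : s ++ [σ] ∈ P j := hKupP j ht
        have hA : σ ∈ A j := hPA j _ hP σ (by simp)
        exact CL.snoc (ih hs) hP ⟨hA, ht⟩
  · intro s hs
    have key : ∀ j, proj (A j) s ∈ Kup j := by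
      intro j
      induction hs with
      | nil => simpa [proj] using hKupε j
      | snoc _ _ hσ ih =>
        have hσj := Set.mem_iInter.mp hσ j
        rw [proj_append]
        rcases hσj with ⟨hA, hK⟩ | hA
        · simpa [proj, hA] using hK
        · simp only [Set.mem_compl_iff] at hA
          simpa [proj, hA] using ih
    rw [hcd]
    exact Set.mem_iInter.mpr fun j => hKupK j (key j)
end

section
/- There exists a supervisor S : Σ* → Set Σ (allowed to force forcible events) with closed-loop language L(S/P) = K if and only if K is F-controllable with respect to L, Σ_c, and Σ_f, where K ⊆ L is prefix-closed and nonempty. -/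
variable {E : Type*}

lemma CL_eq_K (L K : Set (List E)) (hK : PrefixClosed K) (hεK : [] ∈ K)
    (hKL : K ⊆ L) :
    {s | CL (fun s => {σ | s ++ [σ] ∈ K}) L s} = K := by
  ext s
  constructor
  · intro h
    induction h with
    | nil => exact hεK
    | snoc _ _ hσ _ => exact hσ
  · intro hs
    induction s using List.reverseRecOn with
    | nil => exact CL.nil
    | append_singleton t σ ih =>
      have htK : t ∈ K := hK _ hs t ⟨[σ], rfl⟩
      exact CL.snoc (ih htK) (hKL hs) hs

theorem exists_supervisor_iff_FControllable
    (L K : Set (List E)) (Sc Sf : Set E)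
    (hL : PrefixClosed L) (hεL : [] ∈ L)
    (hK : PrefixClosed K) (hεK : [] ∈ K) (hKL : K ⊆ L) :
    (∃ S : List E → Set E,
      (∀ s, CL S L s →
        ({σ | s ++ [σ] ∈ L} \ S s ⊆ Sc) ∨
        (S s ∩ Sf ∩ {σ | s ++ [σ] ∈ L}).Nonempty) ∧
      {s | CL S L s} = K) ↔
    FContr L K Sc Sf := by
  constructor
  · rintro ⟨S, hadm, hCL⟩ s hs σ hσL hσK
    have hsCL : CL S L s := by rw [Set.ext_iff] at hCL; exact (hCL s).2 hs
    have hσS : σ ∉ S s := by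
      intro h
      exact hσK (by rw [← hCL]; exact CL.snoc hsCL hσL h)
    rcases hadm s hsCL with h | ⟨σf, ⟨hfS, hfF⟩, hfL⟩
    · exact Or.inl (h ⟨hσL, hσS⟩)
    · refine Or.inr ⟨σf, hfF, ?_⟩
      rw [← hCL]; exact CL.snoc hsCL hfL hfS
  · intro hFC
    refine ⟨fun s => {σ | s ++ [σ] ∈ K}, ?_, ?_⟩
    · intro s hs
      have hsK : s ∈ K := by
        rw [← CL_eq_K L K hK hεK hKL]; exact hs
      by_cases hf : ∃ σf ∈ Sf, s ++ [σf] ∈ K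
      · rcases hf with ⟨σf, hfF, hfK⟩
        exact Or.inr ⟨σf, ⟨hfK, hfF⟩, hKL hfK⟩
      · refine Or.inl fun σ ⟨hσL, hσK⟩ => ?_
        rcases hFC s hsK σ hσL hσK with h | ⟨σf, hfF, hfK⟩
        · exact h
        · exact absurd ⟨σf, hfF, hfK⟩ hf
    · exact CL_eq_K L K hK hεK hKL
end

section
/- Let L be generated by a finite automaton P = (Q, Σ, δ, q₀) (as the set of strings s with δ(q₀, s) defined), and let H be the sub-automaton of P restricted to a subset Q_H ⊆ Q of legal states with q₀ ∈ Q_H. If no state q ∈ Q_H is 'bad'—where q is bad if there exists an uncontrollable event σ with δ(q,σ) defined in Q but δ(q,σ) ∉ Q_H, and for all forcible events σ_f, δ(q,σ_f) ∉ Q_H—then K = L(H) is F-controllable with respect to L, Σ_c, Σ_f. -/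
variable {E : Type*}

-- Run of a deterministic partial automaton on a string.
def run {Q : Type*} (δ : Q → E → Option Q) (q : Q) (s : List E) : Option Q :=
  s.foldl (fun o σ => o.bind (fun q' => δ q' σ)) (some q)

-- Transition function of the sub-automaton restricted to legal states `QH`.
open Classical in
noncomputable def restrictδ {Q : Type*} (δ : Q → E → Option Q) (QH : Set Q)
    (q : Q) (σ : E) : Option Q :=
  if q ∈ QH then
    (δ q σ).bind (fun q' => if q' ∈ QH then some q' else none)
  else none

/-!
A string `s ∈ K` drives `H`, and hence `P`, from `q0` to a legal state `q`. If `sσ ∈ L \ K`, then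
`δ(q, σ)` is defined but illegal; for uncontrollable `σ` this makes `q` bad unless some forcible
`σf` leads from `q` to a legal state, and then `sσf ∈ K`.
-/

section Automaton

variable {Q : Type*} (δ : Q → E → Option Q) (QH : Set Q)

theorem run_append_singleton (q : Q) (s : List E) (σ : E) :
    run δ q (s ++ [σ]) = (run δ q s).bind (δ · σ) := by
  simp [run, List.foldl_append]

theorem restrictδ_eq_some_iff {q q' : Q} {σ : E} :
    restrictδ δ QH q σ = some q' ↔ q ∈ QH ∧ δ q σ = some q' ∧ q' ∈ QH := by
  unfold restrictδ
  cases h : δ q σ <;> aesop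

theorem run_restrictδ_eq_some {q : Q} (hq : q ∈ QH) {s : List E} {q' : Q}
    (h : run (restrictδ δ QH) q s = some q') : q' ∈ QH ∧ run δ q s = some q' := by
  induction s using List.reverseRecOn generalizing q' with
  | nil =>
    obtain rfl : q = q' := by simpa [run] using h
    exact ⟨hq, rfl⟩
  | append_singleton s σ ih =>
    rw [run_append_singleton, Option.bind_eq_some_iff] at h
    obtain ⟨p, hp, hstep⟩ := h
    obtain ⟨-, hδ, hq'⟩ := (restrictδ_eq_some_iff δ QH).mp hstep
    refine ⟨hq', ?_⟩
    rw [run_append_singleton, (ih hp).2, Option.bind_some, hδ]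

theorem isSome_run_restrictδ_append_singleton_iff {q₀ q : Q} {s : List E}
    (hs : run (restrictδ δ QH) q₀ s = some q) (hq : q ∈ QH) (σ : E) :
    (run (restrictδ δ QH) q₀ (s ++ [σ])).isSome ↔ ∃ q', δ q σ = some q' ∧ q' ∈ QH := by
  simp [run_append_singleton, hs, Option.isSome_iff_exists, restrictδ_eq_some_iff, hq]

end Automaton

theorem no_bad_state_implies_FControllable {Q : Type*}
    (δ : Q → E → Option Q) (q0 : Q) (Sc Sf : Set E) (QH : Set Q)
    (hq0 : q0 ∈ QH)
    (hnobad : ¬ ∃ q ∈ QH,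
        (∃ σ, σ ∉ Sc ∧ ∃ q', δ q σ = some q' ∧ q' ∉ QH) ∧
        (∀ σf ∈ Sf, ∀ q', δ q σf = some q' → q' ∉ QH)) :
    FContr {s | (run δ q0 s).isSome}
      {s | (run (restrictδ δ QH) q0 s).isSome} Sc Sf := by
  intro s hs σ hL hK
  obtain ⟨q, hq⟩ := Option.isSome_iff_exists.mp hs
  obtain ⟨hqQH, hrun⟩ := run_restrictδ_eq_some δ QH hq0 hq
  have hextend := isSome_run_restrictδ_append_singleton_iff δ QH hq hqQH
  obtain ⟨q', hq'⟩ : ∃ q', δ q σ = some q' := by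
    simpa [run_append_singleton, hrun, Option.isSome_iff_exists] using hL
  have hq'_illegal : q' ∉ QH := fun hmem => hK ((hextend σ).mpr ⟨q', hq', hmem⟩)
  by_cases hc : σ ∈ Sc
  · exact Or.inl hc
  · right
    obtain ⟨σf, hσf, hforced⟩ : ∃ σf ∈ Sf, ∃ q'', δ q σf = some q'' ∧ q'' ∈ QH := by
      by_contra! hnone
      exact hnobad ⟨q, hqQH, ⟨σ, hc, q', hq', hq'_illegal⟩, hnone⟩
    exact ⟨σf, hσf, (hextend σf).mpr hforced⟩
end
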